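/- arXiv:1509.09072 — 3 statements merged into one kernel-verified Lean document; each statement's English description precedes it below -/
import Mathlib

section
/- Let (a_k)_{k≥0} be a sequence of real numbers with a₀ ≥ a₁ ≥ a₂ ≥ ⋯ > 0 and a := Σ_{j≥0} a_j < ∞. Then for any δ > 0 there exist a function v : ℝ → ℝ, infinitely differentiable with compact support, and a constant M > 0, such that v ≥ 0 everywhere, ∫_ℝ v(x) dx = 1, the support of v is contained in [0,a], and |v^{(k)}(x)| ≤ M δ^k (a₀ a₁ ⋯ a_k)^{-1} for all k ∈ ℕ and all x ∈ ℝ. -/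
/-!
Hörmander's construction. Averaging a function over a window of length `β`,
`f ↦ (1/β) ∫_{x-β}^{x} f`, preserves nonnegativity and the integral, enlarges the support by
`β`, and gains one derivative: the new derivative is the difference quotient
`(f x - f (x - β)) / β`, which costs a factor `2 / β` in the sup norm. Starting from the
normalised indicator of `[0, b₀)` and averaging successively with windows `b₁, b₂, …` of
summable total length, the `k`-th derivatives are bounded by `2ᵏ / (b₁ ⋯ b_{k+1})` and converge
uniformly, since one more averaging moves a `C¹` function by at most `β · sup |f'|`. The limit is
a smooth bump supported in `[0, ∑ bᵢ]`.

For a given sequence `a` one takes `b_{i+1} = (2/δ) a_{max i K}`: the extra factor `2/δ` turns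
`2ᵏ` into `δᵏ`, and replacing the first `K` terms by `a_K` makes the total length
`(2/δ)((K + 1) a_K + ∑_{i ≥ K} a_i)` small for large `K` (as `K a_K → 0`), at the price of the
constant `(a₀ / a_K)ᴷ`.
-/

open Set MeasureTheory Filter Topology

theorem exists_tendstoUniformly_of_summable_norm_sub_le {α E : Type*} [NormedAddCommGroup E]
    [CompleteSpace E] {F : ℕ → α → E} {u : ℕ → ℝ} (hu : Summable u) (m : ℕ)
    (hF : ∀ n ≥ m, ∀ x, ‖F (n + 1) x - F n x‖ ≤ u n) :
    ∃ G, TendstoUniformly F G atTop := by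
  have hsum := tendstoUniformly_tsum_nat ((summable_nat_add_iff m).2 hu)
    (f := fun n x => F (n + 1 + m) x - F (n + m) x)
    (fun n x => by simpa only [Nat.add_right_comm n 1 m] using hF (n + m) (by omega) x)
  refine ⟨fun x => (∑' n, (F (n + 1 + m) x - F (n + m) x)) + F m x, ?_⟩
  have htelescope : TendstoUniformly (fun n x => F (n + m) x)
      (fun x => (∑' n, (F (n + 1 + m) x - F (n + m) x)) + F m x) atTop := by
    convert hsum.add (f' := fun _ => F m)
      (fun s hs => .of_forall fun _ _ => refl_mem_uniformity hs) using 1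
    · ext n x
      simp only [Pi.add_apply, Finset.sum_range_sub (fun i => F (i + m) x)]
      simp
    · rfl
  intro s hs
  rw [← map_add_atTop_eq_nat m]
  exact htelescope s hs

section LimitOfIteratedDerivs

variable {𝕜 E : Type*} [NontriviallyNormedField 𝕜] [IsRCLikeNormedField 𝕜]
  [NormedAddCommGroup E] [NormedSpace 𝕜 E] {F : ℕ → 𝕜 → E} {V : ℕ → 𝕜 → E}

theorem hasDerivAt_of_tendstoUniformly_iteratedDeriv
    (hF : ∀ k : ℕ, ∀ᶠ n in atTop, ContDiff 𝕜 (k + 1) (F n))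
    (hV : ∀ k, TendstoUniformly (fun n => iteratedDeriv k (F n)) (V k) atTop) (k : ℕ) (x : 𝕜) :
    HasDerivAt (V k) (V (k + 1) x) x :=
  hasDerivAt_of_tendstoUniformly (hV (k + 1))
    ((hF k).mono fun n hn y => by
      rw [iteratedDeriv_succ]
      exact (hn.differentiable_iteratedDeriv' k y).hasDerivAt)
    (fun y => (hV k).tendsto_at y) x

theorem iteratedDeriv_eq_of_tendstoUniformly_iteratedDeriv
    (hF : ∀ k : ℕ, ∀ᶠ n in atTop, ContDiff 𝕜 (k + 1) (F n))
    (hV : ∀ k, TendstoUniformly (fun n => iteratedDeriv k (F n)) (V k) atTop) (k : ℕ) :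
    iteratedDeriv k (V 0) = V k := by
  induction k with
  | zero => exact iteratedDeriv_zero
  | succ k ih =>
    rw [iteratedDeriv_succ, ih]
    exact funext fun x => (hasDerivAt_of_tendstoUniformly_iteratedDeriv hF hV k x).deriv

theorem contDiff_of_tendstoUniformly_iteratedDeriv
    (hF : ∀ k : ℕ, ∀ᶠ n in atTop, ContDiff 𝕜 (k + 1) (F n))
    (hV : ∀ k, TendstoUniformly (fun n => iteratedDeriv k (F n)) (V k) atTop) :
    ContDiff 𝕜 (⊤ : ℕ∞) (V 0) :=
  contDiff_of_differentiable_iteratedDeriv fun k _ => by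
    rw [iteratedDeriv_eq_of_tendstoUniformly_iteratedDeriv hF hV k]
    exact fun x => (hasDerivAt_of_tendstoUniformly_iteratedDeriv hF hV k x).differentiableAt

end LimitOfIteratedDerivs

noncomputable def movingAverage (β : ℝ) (f : ℝ → ℝ) (x : ℝ) : ℝ :=
  (∫ t in (x - β)..x, f t) / β

section MovingAverage

variable {β : ℝ} {f : ℝ → ℝ}

theorem movingAverage_eq_sub_primitive (hf : ∀ r s, IntervalIntegrable f volume r s) :
    movingAverage β f = fun x => ((∫ t in (0)..x, f t) - ∫ t in (0)..(x - β), f t) / β := by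
  ext x
  rw [movingAverage, intervalIntegral.integral_interval_sub_left (hf 0 x) (hf 0 (x - β))]

theorem continuous_movingAverage (hf : LocallyIntegrable f) : Continuous (movingAverage β f) := by
  have hf' (r s : ℝ) : IntervalIntegrable f volume r s :=
    (hf.integrableOn_isCompact isCompact_uIcc).intervalIntegrable
  have hP := intervalIntegral.continuous_primitive hf' 0
  rw [movingAverage_eq_sub_primitive hf']
  exact (hP.sub (hP.comp (continuous_sub_right β))).div_const β

theorem hasDerivAt_movingAverage (hf : Continuous f) (x : ℝ) :
    HasDerivAt (movingAverage β f) ((f x - f (x - β)) / β) x := by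
  have hP (y : ℝ) : HasDerivAt (fun u => ∫ t in (0)..u, f t) (f y) y :=
    (hf.integral_hasStrictDerivAt 0 y).hasDerivAt
  rw [movingAverage_eq_sub_primitive fun r s => hf.intervalIntegrable r s]
  exact ((hP x).sub ((hP (x - β)).comp_sub_const x β)).div_const β

theorem movingAverage_deriv (hf : ContDiff ℝ 1 f) (x : ℝ) :
    movingAverage β (deriv f) x = (f x - f (x - β)) / β := by
  rw [movingAverage, intervalIntegral.integral_deriv_eq_sub
    (fun t _ => hf.differentiable one_ne_zero t)
    ((hf.continuous_deriv le_rfl).intervalIntegrable _ _)]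

theorem deriv_movingAverage (hf : ContDiff ℝ 1 f) :
    deriv (movingAverage β f) = movingAverage β (deriv f) :=
  funext fun x => by rw [(hasDerivAt_movingAverage hf.continuous x).deriv, movingAverage_deriv hf]

theorem contDiff_movingAverage {n : ℕ} (hf : ContDiff ℝ n f) :
    ContDiff ℝ (n + 1) (movingAverage β f) := by
  rw [contDiff_succ_iff_deriv]
  refine ⟨fun x => (hasDerivAt_movingAverage hf.continuous x).differentiableAt, by simp, ?_⟩
  rw [funext fun x => (hasDerivAt_movingAverage (β := β) hf.continuous x).deriv]
  exact (hf.sub (hf.comp (contDiff_id.sub contDiff_const))).div_const β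

theorem iteratedDeriv_movingAverage {n j : ℕ} (hf : ContDiff ℝ n f) (hj : j ≤ n) :
    iteratedDeriv j (movingAverage β f) = movingAverage β (iteratedDeriv j f) := by
  induction j with
  | zero => simp only [iteratedDeriv_zero]
  | succ j ih =>
    have hf' : ContDiff ℝ 1 (iteratedDeriv j f) := by
      rw [iteratedDeriv_eq_iterate]
      exact ContDiff.iterate_deriv' 1 j (hf.of_le (by exact_mod_cast (by omega : 1 + j ≤ n)))
    rw [iteratedDeriv_succ, ih (by omega), iteratedDeriv_succ, deriv_movingAverage hf']

theorem movingAverage_nonneg (hβ : 0 ≤ β) (hf : ∀ x, 0 ≤ f x) (x : ℝ) :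
    0 ≤ movingAverage β f x :=
  div_nonneg (intervalIntegral.integral_nonneg (by linarith) fun t _ => hf t) hβ

theorem abs_movingAverage_le (hβ : 0 < β) {C : ℝ} (hC : ∀ x, |f x| ≤ C) (x : ℝ) :
    |movingAverage β f x| ≤ C := by
  have h := intervalIntegral.norm_integral_le_of_norm_le_const (a := x - β) (b := x) (f := f)
    fun t _ => hC t
  rw [sub_sub_cancel, abs_of_pos hβ] at h
  rw [movingAverage, abs_div, abs_of_pos hβ, div_le_iff₀ hβ]
  exact h

theorem movingAverage_le_integral_div (hβ : 0 < β) (hf : Integrable f) (hf0 : ∀ x, 0 ≤ f x)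
    (x : ℝ) : movingAverage β f x ≤ (∫ t, f t) / β := by
  rw [movingAverage, intervalIntegral.integral_of_le (by linarith)]
  exact div_le_div_of_nonneg_right (setIntegral_le_integral hf (.of_forall hf0)) hβ.le

theorem movingAverage_eq_zero_of_notMem (hβ : 0 ≤ β) {L : ℝ} (hf : ∀ x ∉ Icc 0 L, f x = 0)
    {x : ℝ} (hx : x ∉ Icc 0 (L + β)) : movingAverage β f x = 0 := by
  rw [movingAverage, intervalIntegral.integral_congr (g := fun _ => 0),
    intervalIntegral.integral_zero, zero_div]
  intro t ht
  rw [uIcc_of_le (by linarith)] at ht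
  refine hf t fun htL => hx ⟨?_, ?_⟩ <;> linarith [ht.1, ht.2, htL.1, htL.2]

theorem movingAverage_eq_convolution (hβ : 0 ≤ β) :
    movingAverage β f =
      convolution ((Ioc 0 β).indicator fun _ => β⁻¹) f (ContinuousLinearMap.lsmul ℝ ℝ) := by
  ext x
  have hmul (t : ℝ) : (Ioc 0 β).indicator (fun _ => β⁻¹) t * f (x - t) =
      (Ioc 0 β).indicator (fun t => β⁻¹ * f (x - t)) t :=
    (indicator_mul_left _ _ (fun t => f (x - t))).symm
  simp only [convolution, ContinuousLinearMap.lsmul_apply, smul_eq_mul, hmul]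
  rw [integral_indicator measurableSet_Ioc, ← intervalIntegral.integral_of_le hβ,
    intervalIntegral.integral_const_mul, intervalIntegral.integral_comp_sub_left f x, sub_zero,
    movingAverage, div_eq_inv_mul]

theorem integrable_movingAverage (hβ : 0 ≤ β) (hf : Integrable f) :
    Integrable (movingAverage β f) := by
  rw [movingAverage_eq_convolution hβ]
  refine Integrable.integrable_convolution _ ?_ hf
  exact (integrable_indicator_iff measurableSet_Ioc).2 (integrableOn_const (by simp))

theorem integral_movingAverage (hβ : 0 < β) (hf : Integrable f) :
    ∫ x, movingAverage β f x = ∫ x, f x := by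
  have hker : Integrable ((Ioc 0 β).indicator fun _ : ℝ => β⁻¹) :=
    (integrable_indicator_iff measurableSet_Ioc).2 (integrableOn_const (by simp))
  rw [movingAverage_eq_convolution hβ.le, integral_convolution _ hker hf,
    integral_indicator_const _ measurableSet_Ioc]
  simp [hβ.le, hβ.ne']

theorem abs_movingAverage_sub_le (hβ : 0 < β) (hf : Differentiable ℝ f) {C : ℝ}
    (hC : ∀ x, |deriv f x| ≤ C) (x : ℝ) : |movingAverage β f x - f x| ≤ C * β := by
  have hlip (t : ℝ) : |f t - f x| ≤ C * |t - x| :=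
    convex_univ.norm_image_sub_le_of_norm_deriv_le (fun y _ => hf y) (fun y _ => hC y)
      (mem_univ x) (mem_univ t)
  have hdiff : movingAverage β f x - f x = (∫ t in (x - β)..x, (f t - f x)) / β := by
    rw [intervalIntegral.integral_sub (hf.continuous.intervalIntegrable _ _)
      intervalIntegrable_const, intervalIntegral.integral_const, movingAverage, sub_sub_cancel,
      smul_eq_mul]
    field_simp
  have h := intervalIntegral.norm_integral_le_of_norm_le_const (a := x - β) (b := x)
    (f := fun t => f t - f x) (C := C * β) fun t ht => by
      rw [uIoc_of_le (by linarith)] at ht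
      refine (hlip t).trans (mul_le_mul_of_nonneg_left ?_ ((abs_nonneg _).trans (hC x)))
      rw [abs_le]
      constructor <;> linarith [ht.1, ht.2]
  rw [sub_sub_cancel, abs_of_pos hβ] at h
  rw [hdiff, abs_div, abs_of_pos hβ, div_le_iff₀ hβ]
  exact h

end MovingAverage

noncomputable def bumpApprox (b : ℕ → ℝ) : ℕ → ℝ → ℝ
  | 0 => (Ico 0 (b 0)).indicator fun _ => (b 0)⁻¹
  | n + 1 => movingAverage (b (n + 1)) (bumpApprox b n)

noncomputable def bumpDerivBound (b : ℕ → ℝ) (k : ℕ) : ℝ :=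
  2 ^ k / ∏ i ∈ Finset.range (k + 1), b (i + 1)

section BumpApprox

variable {b : ℕ → ℝ}

theorem bumpApprox_nonneg (hb : ∀ i, 0 < b i) (n : ℕ) (x : ℝ) : 0 ≤ bumpApprox b n x := by
  induction n generalizing x with
  | zero => exact indicator_nonneg (fun _ _ => (inv_pos.2 (hb 0)).le) x
  | succ n ih => exact movingAverage_nonneg (hb _).le ih x

theorem bumpApprox_eq_zero_of_notMem (hb : ∀ i, 0 < b i) (n : ℕ) {x : ℝ}
    (hx : x ∉ Icc 0 (∑ i ∈ Finset.range (n + 1), b i)) : bumpApprox b n x = 0 := by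
  induction n generalizing x with
  | zero =>
    refine indicator_of_notMem (fun h => hx ⟨h.1, ?_⟩) _
    simpa using h.2.le
  | succ n ih =>
    rw [Finset.sum_range_succ] at hx
    exact movingAverage_eq_zero_of_notMem (hb _).le (fun y hy => ih hy) hx

theorem integrable_bumpApprox (hb : ∀ i, 0 < b i) (n : ℕ) : Integrable (bumpApprox b n) := by
  induction n with
  | zero => exact (integrable_indicator_iff measurableSet_Ico).2 (integrableOn_const (by simp))
  | succ n ih => exact integrable_movingAverage (hb _).le ih

theorem integral_bumpApprox (hb : ∀ i, 0 < b i) (n : ℕ) : ∫ x, bumpApprox b n x = 1 := by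
  induction n with
  | zero =>
    rw [bumpApprox, integral_indicator_const _ measurableSet_Ico]
    simp [(hb 0).le, (hb 0).ne']
  | succ n ih => rw [bumpApprox, integral_movingAverage (hb _) (integrable_bumpApprox hb n), ih]

theorem contDiff_bumpApprox (hb : ∀ i, 0 < b i) (n : ℕ) :
    ContDiff ℝ n (bumpApprox b (n + 1)) := by
  induction n with
  | zero =>
    exact contDiff_zero.2 (continuous_movingAverage (integrable_bumpApprox hb 0).locallyIntegrable)
  | succ n ih => exact_mod_cast contDiff_movingAverage ih

theorem iteratedDeriv_bumpApprox_succ (hb : ∀ i, 0 < b i) {n j : ℕ} (hj : j ≤ n) :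
    iteratedDeriv j (bumpApprox b (n + 2)) =
      movingAverage (b (n + 2)) (iteratedDeriv j (bumpApprox b (n + 1))) :=
  iteratedDeriv_movingAverage (contDiff_bumpApprox hb n) hj

theorem iteratedDeriv_succ_bumpApprox_succ (hb : ∀ i, 0 < b i) (n : ℕ) (x : ℝ) :
    iteratedDeriv (n + 1) (bumpApprox b (n + 2)) x =
      (iteratedDeriv n (bumpApprox b (n + 1)) x -
        iteratedDeriv n (bumpApprox b (n + 1)) (x - b (n + 2))) / b (n + 2) := by
  rw [iteratedDeriv_succ, iteratedDeriv_bumpApprox_succ hb le_rfl]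
  exact (hasDerivAt_movingAverage
    ((contDiff_bumpApprox hb n).continuous_iteratedDeriv' n) x).deriv

theorem bumpDerivBound_succ (hb : ∀ i, 0 < b i) (k : ℕ) :
    bumpDerivBound b (k + 1) = (bumpDerivBound b k + bumpDerivBound b k) / b (k + 2) := by
  have := Finset.prod_pos fun i (_ : i ∈ Finset.range (k + 1)) => hb (i + 1)
  have := hb (k + 2)
  rw [bumpDerivBound, bumpDerivBound, Finset.prod_range_succ]
  field_simp
  ring

theorem abs_iteratedDeriv_bumpApprox_le (hb : ∀ i, 0 < b i) {n j : ℕ} (hj : j ≤ n) (x : ℝ) :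
    |iteratedDeriv j (bumpApprox b (n + 1)) x| ≤ bumpDerivBound b j := by
  induction n generalizing j x with
  | zero =>
    obtain rfl : j = 0 := by omega
    have h := movingAverage_le_integral_div (hb 1) (integrable_bumpApprox hb 0)
      (bumpApprox_nonneg hb 0) x
    rw [integral_bumpApprox hb] at h
    rw [iteratedDeriv_zero, abs_of_nonneg (bumpApprox_nonneg hb 1 x)]
    simpa [bumpApprox, bumpDerivBound] using h
  | succ n ih =>
    rcases hj.lt_or_eq with hj | rfl
    · rw [iteratedDeriv_bumpApprox_succ hb (by omega)]
      exact abs_movingAverage_le (hb _) (ih (by omega)) x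
    · rw [iteratedDeriv_succ_bumpApprox_succ hb, bumpDerivBound_succ hb, abs_div,
        abs_of_pos (hb _)]
      exact div_le_div_of_nonneg_right
        ((abs_sub _ _).trans (add_le_add (ih le_rfl x) (ih le_rfl _))) (hb _).le

theorem abs_iteratedDeriv_bumpApprox_succ_sub_le (hb : ∀ i, 0 < b i) {n k : ℕ} (hk : k < n)
    (x : ℝ) :
    |iteratedDeriv k (bumpApprox b (n + 2)) x - iteratedDeriv k (bumpApprox b (n + 1)) x| ≤
      bumpDerivBound b (k + 1) * b (n + 2) := by
  rw [iteratedDeriv_bumpApprox_succ hb hk.le]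
  refine abs_movingAverage_sub_le (hb _)
    ((contDiff_bumpApprox hb n).differentiable_iteratedDeriv k (by exact_mod_cast hk)) ?_ x
  intro y
  rw [← iteratedDeriv_succ]
  exact abs_iteratedDeriv_bumpApprox_le hb hk y

theorem eventually_contDiff_bumpApprox (hb : ∀ i, 0 < b i) (k : ℕ) :
    ∀ᶠ n in atTop, ContDiff ℝ (k + 1) (bumpApprox b n) := by
  filter_upwards [eventually_ge_atTop (k + 2)] with n hn
  obtain ⟨n, rfl⟩ := Nat.exists_eq_add_of_le' hn
  exact (contDiff_bumpApprox hb _).of_le (by exact_mod_cast (by omega : k + 1 ≤ n + k + 1))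

theorem exists_tendstoUniformly_iteratedDeriv_bumpApprox (hb : ∀ i, 0 < b i) (hsb : Summable b)
    (k : ℕ) : ∃ V, TendstoUniformly (fun n => iteratedDeriv k (bumpApprox b n)) V atTop := by
  refine exists_tendstoUniformly_of_summable_norm_sub_le
    (((summable_nat_add_iff 1).2 hsb).mul_left (bumpDerivBound b (k + 1))) (k + 2) ?_
  intro n hn x
  obtain ⟨n, rfl⟩ := Nat.exists_eq_add_of_le' (by omega : 1 ≤ n)
  exact abs_iteratedDeriv_bumpApprox_succ_sub_le hb (by omega) x

theorem bumpApprox_eq_zero_of_notMem_tsum (hb : ∀ i, 0 < b i) (hsb : Summable b) (n : ℕ)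
    {x : ℝ} (hx : x ∉ Icc 0 (∑' i, b i)) : bumpApprox b n x = 0 :=
  bumpApprox_eq_zero_of_notMem hb n fun h =>
    hx ⟨h.1, h.2.trans (hsb.sum_le_tsum _ fun i _ => (hb i).le)⟩

theorem integral_eq_one_of_tendsto_bumpApprox (hb : ∀ i, 0 < b i) (hsb : Summable b)
    {v : ℝ → ℝ} (hv : ∀ x, Tendsto (fun n => bumpApprox b n x) atTop (𝓝 (v x))) : ∫ x, v x = 1 := by
  have hdom : ∀ᶠ n in atTop, ∀ᵐ x, ‖bumpApprox b n x‖ ≤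
      (Icc 0 (∑' i, b i)).indicator (fun _ => bumpDerivBound b 0) x := by
    filter_upwards [eventually_ge_atTop 1] with n hn
    obtain ⟨n, rfl⟩ := Nat.exists_eq_add_of_le' hn
    refine .of_forall fun x => ?_
    by_cases hx : x ∈ Icc 0 (∑' i, b i)
    · rw [indicator_of_mem hx, Real.norm_eq_abs, ← iteratedDeriv_zero (f := bumpApprox b _)]
      exact abs_iteratedDeriv_bumpApprox_le hb (Nat.zero_le n) x
    · rw [indicator_of_notMem hx, bumpApprox_eq_zero_of_notMem_tsum hb hsb _ hx, norm_zero]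
  have hint := tendsto_integral_filter_of_dominated_convergence _
    (.of_forall fun n => (integrable_bumpApprox hb n).aestronglyMeasurable) hdom
    ((integrable_indicator_iff measurableSet_Icc).2 (integrableOn_const (by simp)))
    (.of_forall hv)
  simp only [integral_bumpApprox hb] at hint
  exact tendsto_nhds_unique hint tendsto_const_nhds

theorem exists_bump_of_summable (hb : ∀ i, 0 < b i) (hsb : Summable b) :
    ∃ v : ℝ → ℝ, ContDiff ℝ (⊤ : ℕ∞) v ∧ HasCompactSupport v ∧ (∀ x, 0 ≤ v x) ∧
      ∫ x, v x = 1 ∧ tsupport v ⊆ Icc 0 (∑' i, b i) ∧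
      ∀ k x, |iteratedDeriv k v x| ≤ bumpDerivBound b k := by
  choose V hV using exists_tendstoUniformly_iteratedDeriv_bumpApprox hb hsb
  have hderiv := iteratedDeriv_eq_of_tendstoUniformly_iteratedDeriv
    (eventually_contDiff_bumpApprox hb) hV
  have hlim (k : ℕ) (x : ℝ) :
      Tendsto (fun n => iteratedDeriv k (bumpApprox b n) x) atTop
        (𝓝 (iteratedDeriv k (V 0) x)) :=
    hderiv k ▸ (hV k).tendsto_at x
  have hlim₀ (x : ℝ) : Tendsto (fun n => bumpApprox b n x) atTop (𝓝 (V 0 x)) := by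
    simpa using hlim 0 x
  have hzero (x : ℝ) (hx : x ∉ Icc 0 (∑' i, b i)) : V 0 x = 0 :=
    tendsto_nhds_unique (hlim₀ x) <| tendsto_const_nhds.congr fun n =>
      (bumpApprox_eq_zero_of_notMem_tsum hb hsb n hx).symm
  refine ⟨V 0, contDiff_of_tendstoUniformly_iteratedDeriv (eventually_contDiff_bumpApprox hb) hV,
    .intro isCompact_Icc hzero,
    fun x => ge_of_tendsto' (hlim₀ x) fun n => bumpApprox_nonneg hb n x,
    integral_eq_one_of_tendsto_bumpApprox hb hsb hlim₀,
    closure_minimal (fun x hx => by_contra fun h => hx (hzero x h)) isClosed_Icc, fun k x => ?_⟩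
  refine le_of_tendsto (hlim k x).abs ?_
  filter_upwards [eventually_ge_atTop (k + 1)] with n hn
  obtain ⟨n, rfl⟩ := Nat.exists_eq_add_of_le' (by omega : 1 ≤ n)
  exact abs_iteratedDeriv_bumpApprox_le hb (by omega) x

end BumpApprox

theorem Antitone.tendsto_nat_mul_of_summable {a : ℕ → ℝ} (ha : Antitone a) (hs : Summable a) :
    Tendsto (fun n : ℕ => n * a n) atTop (𝓝 0) := by
  have h0 (n : ℕ) : 0 ≤ a n := not_lt.1 fun h => not_summable_of_antitone_of_neg ha h hs
  have htail : Tendsto (fun n => 2 * ∑' i, a (i + n / 2)) atTop (𝓝 0) := by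
    simpa using ((tendsto_sum_nat_add a).comp
      (map_div_atTop_eq_nat 2 two_pos).le).const_mul 2
  refine squeeze_zero (fun n => mul_nonneg n.cast_nonneg (h0 n)) (fun n => ?_) htail
  calc (n : ℝ) * a n ≤ 2 * ((n - n / 2 : ℕ) * a n) := by
        rw [← mul_assoc]
        exact mul_le_mul_of_nonneg_right
          (by exact_mod_cast (by omega : n ≤ 2 * (n - n / 2))) (h0 n)
    _ ≤ 2 * ∑ i ∈ Finset.range (n - n / 2), a (i + n / 2) := by
        gcongr
        simpa using Finset.card_nsmul_le_sum (Finset.range (n - n / 2)) (fun i => a (i + n / 2))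
          (a n) fun i hi => ha (by simp at hi; omega)
    _ ≤ 2 * ∑' i, a (i + n / 2) := by
        gcongr
        exact ((summable_nat_add_iff _).2 hs).sum_le_tsum _ fun i _ => h0 _

theorem hasSum_comp_max {a : ℕ → ℝ} (hs : Summable a) (K : ℕ) :
    HasSum (fun i => a (max i K)) (∑' i, a (i + K) + K * a K) := by
  have htail : HasSum (fun i => a (max (i + K) K)) (∑' i, a (i + K)) := by
    simpa using ((summable_nat_add_iff K).2 hs).hasSum
  have hhead : ∑ i ∈ Finset.range K, a (max i K) = K * a K := by
    rw [Finset.sum_congr rfl fun i hi => by rw [max_eq_right (Finset.mem_range.1 hi).le]]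
    simp
  simpa [hhead] using (hasSum_nat_add_iff (f := fun i => a (max i K)) K).1 htail

theorem Antitone.prod_range_le_pow_mul_prod_max {a : ℕ → ℝ} (ha : Antitone a)
    (hpos : ∀ i, 0 < a i) (K n : ℕ) :
    ∏ i ∈ Finset.range n, a i ≤ (a 0 / a K) ^ K * ∏ i ∈ Finset.range n, a (max i K) := by
  have hC : 1 ≤ a 0 / a K := (one_le_div (hpos K)).2 (ha (Nat.zero_le K))
  suffices h : ∏ i ∈ Finset.range n, a i ≤
      (a 0 / a K) ^ min n K * ∏ i ∈ Finset.range n, a (max i K) from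
    h.trans (mul_le_mul_of_nonneg_right (pow_le_pow_right₀ hC (min_le_right n K))
      (Finset.prod_nonneg fun i _ => (hpos _).le))
  induction n with
  | zero => simp
  | succ n ih =>
    rw [Finset.prod_range_succ, Finset.prod_range_succ]
    rcases lt_or_ge n K with hn | hn
    · rw [min_eq_left hn.le] at ih
      rw [min_eq_left (by omega : n + 1 ≤ K), max_eq_right hn.le]
      have hP := Finset.prod_pos fun i (_ : i ∈ Finset.range n) => hpos (max i K)
      calc _ ≤ (a 0 / a K) ^ n * (∏ i ∈ Finset.range n, a (max i K)) * a 0 :=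
            mul_le_mul ih (ha (Nat.zero_le n)) (hpos n).le
              (mul_nonneg (pow_nonneg (zero_le_one.trans hC) n) hP.le)
        _ = _ := by rw [pow_succ]; field_simp [(hpos K).ne']
    · rw [min_eq_right hn] at ih
      rw [min_eq_right (by omega : K ≤ n + 1), max_eq_left hn, ← mul_assoc]
      exact mul_le_mul_of_nonneg_right ih (hpos n).le

theorem bumpDerivBound_mul_max_pred_le {a : ℕ → ℝ} (ha : Antitone a) (hpos : ∀ i, 0 < a i)
    {c : ℝ} (hc : 0 < c) (K k : ℕ) :
    bumpDerivBound (fun i => c * a (max (i - 1) K)) k ≤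
      (a 0 / a K) ^ K / c * (2 / c) ^ k / ∏ i ∈ Finset.range (k + 1), a i := by
  have hP := Finset.prod_pos fun i (_ : i ∈ Finset.range (k + 1)) => hpos i
  have hQ := Finset.prod_pos fun i (_ : i ∈ Finset.range (k + 1)) => hpos (max i K)
  have hK := hpos K
  simp only [bumpDerivBound, Nat.add_sub_cancel, Finset.prod_mul_distrib, Finset.prod_const,
    Finset.card_range]
  rw [div_le_div_iff₀ (by positivity) hP]
  calc 2 ^ k * ∏ i ∈ Finset.range (k + 1), a i
      ≤ 2 ^ k * ((a 0 / a K) ^ K * ∏ i ∈ Finset.range (k + 1), a (max i K)) := by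
        gcongr
        exact ha.prod_range_le_pow_mul_prod_max hpos K (k + 1)
    _ = (a 0 / a K) ^ K / c * (2 / c) ^ k *
          (c ^ (k + 1) * ∏ i ∈ Finset.range (k + 1), a (max i K)) := by
        rw [pow_succ]
        field_simp
        rw [mul_assoc, ← mul_pow, div_mul_cancel₀ _ hc.ne', mul_comm]

/-- Refined Hörmander cutoff lemma: for a nonincreasing positive summable
sequence (a_k) with sum a, and any δ > 0, there is a smooth bump v ≥ 0 with
∫ v = 1, supp v ⊆ [0,a] and |v^{(k)}| ≤ M δ^k (a₀ a₁ ⋯ a_k)⁻¹. -/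
theorem stmt_10 (a : ℕ → ℝ) (hpos : ∀ k, 0 < a k) (hmono : ∀ k, a (k + 1) ≤ a k)
    (hsum : Summable a) (δ : ℝ) (hδ : 0 < δ) :
    ∃ v : ℝ → ℝ, ContDiff ℝ (⊤ : ℕ∞) v ∧ HasCompactSupport v ∧ ∃ M : ℝ, 0 < M ∧
      (∀ x : ℝ, 0 ≤ v x) ∧ (∫ x : ℝ, v x) = 1 ∧
      tsupport v ⊆ Icc 0 (∑' j : ℕ, a j) ∧
      ∀ k : ℕ, ∀ x : ℝ,
        |iteratedDeriv k v x| ≤ M * δ ^ k / ∏ i ∈ Finset.range (k + 1), a i := by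
  have hanti : Antitone a := antitone_nat_of_succ_le hmono
  have hc : 0 < 2 / δ := by positivity
  have hA : 0 < ∑' j, a j := (hpos 0).trans_le (hsum.le_tsum 0 fun j _ => (hpos j).le)
  have hsmall : Tendsto (fun K : ℕ => ∑' i, a (i + K) + K * a K + a K) atTop (𝓝 0) := by
    simpa using ((tendsto_sum_nat_add a).add (hanti.tendsto_nat_mul_of_summable hsum)).add
      hsum.tendsto_atTop_zero
  obtain ⟨K, hK⟩ := (hsmall.eventually (gt_mem_nhds (div_pos hA hc))).exists
  have hb (i : ℕ) : 0 < 2 / δ * a (max (i - 1) K) := mul_pos hc (hpos _)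
  have hbsum : HasSum (fun i => 2 / δ * a (max (i - 1) K))
      (2 / δ * (∑' i, a (i + K) + K * a K + a K)) := by
    have h := (hasSum_nat_add_iff (f := fun i => 2 / δ * a (max (i - 1) K)) 1).1
      (by simpa only [Nat.add_sub_cancel] using (hasSum_comp_max hsum K).mul_left (2 / δ))
    rw [Finset.sum_range_one, Nat.zero_sub, max_eq_right (Nat.zero_le K), ← mul_add] at h
    exact h
  obtain ⟨v, hv, hvc, hv0, hv1, hvsupp, hvbound⟩ := exists_bump_of_summable hb hbsum.summable
  refine ⟨v, hv, hvc, (a 0 / a K) ^ K / (2 / δ),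
    div_pos (pow_pos (div_pos (hpos 0) (hpos K)) K) hc, hv0, hv1,
    hvsupp.trans (Icc_subset_Icc_right ?_), fun k x => (hvbound k x).trans ?_⟩
  · rw [hbsum.tsum_eq]
    exact ((lt_div_iff₀' hc).1 hK).le
  · simpa [div_div_cancel₀ (two_ne_zero' ℝ)] using
      bumpDerivBound_mul_max_pred_le hanti hpos hc K k
end

section
/- Let (a_k)_{k≥1} be a sequence of real numbers with a₁ ≥ a₂ ≥ ⋯ > 0 and a := Σ_{k≥1} a_k < ∞. Then for any δ > 0 there exist a function φ : ℝ → ℝ, infinitely differentiable with compact support, and a constant C > 0, such that the support of φ is contained in [-a,a], 0 ≤ φ(x) ≤ 1 for all x, φ(0) = 1, φ^{(p)}(0) = 0 for all p ≥ 1, and |φ^{(k)}(x)| ≤ C δ^k (a₁ ⋯ a_k)^{-1} for all k ∈ ℕ and all x ∈ ℝ (with the convention that the empty product a₁ ⋯ a_k equals 1 when k = 0). -/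
open Set Filter Metric Topology

/-!
Hörmander's construction. Let `T_c f` be the average of `f` over the window `[x - c/2, x + c/2]`.
Then `(T_c f)' = (f(· + c/2) - f(· - c/2)) / c`, so each averaging absorbs one derivative at
the price of a factor `2 / c`, and `T_c` commutes with differentiation. Hence the limit `φ` of
`T_{b_n} ⋯ T_{b_0} u`, for a continuous `u` with `|u| ≤ 1` and summable widths `b_i`, is smooth
with `|φ^{(k)}| ≤ 2^k / (b_0 ⋯ b_{k-1})`, and `φ(x)` only sees `u` on the ball of radius
`∑ b_i / 2` around `x`. Taking `b_i = 2 a_{i+1} / δ` except for finitely many indices, where the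
width is shrunk by a fixed factor, keeps `∑ b_i ≤ a / 4` and costs only a constant `C`.
-/

noncomputable def boxAvg (b : ℝ) (f : ℝ → ℝ) (x : ℝ) : ℝ :=
  (∫ t in x - b / 2..x + b / 2, f t) / b

noncomputable def centralDiff (b : ℝ) (f : ℝ → ℝ) (x : ℝ) : ℝ :=
  (f (x + b / 2) - f (x - b / 2)) / b

section BoxAverage

variable {b : ℝ} {f f' : ℝ → ℝ}

theorem continuous_centralDiff (hf : Continuous f) : Continuous (centralDiff b f) := by
  unfold centralDiff
  fun_prop

theorem abs_centralDiff_le {B : ℝ} (hb : 0 < b) (hB : ∀ t, |f t| ≤ B) (x : ℝ) :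
    |centralDiff b f x| ≤ 2 * B / b := by
  rw [centralDiff, abs_div, abs_of_pos hb]
  gcongr
  linarith [abs_sub (f (x + b / 2)) (f (x - b / 2)), hB (x + b / 2), hB (x - b / 2)]

theorem hasDerivAt_boxAvg (hf : Continuous f) (x : ℝ) :
    HasDerivAt (boxAvg b f) (centralDiff b f x) x := by
  have hF : ∀ c, HasDerivAt (fun y => ∫ t in (0 : ℝ)..y + c, f t) (f (x + c)) x := fun c => by
    simpa [Function.comp_def] using (hf.integral_hasStrictDerivAt 0 (x + c)).hasDerivAt.comp x
      ((hasDerivAt_id x).add_const c)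
  have hsplit : boxAvg b f =
      fun y => ((∫ t in (0 : ℝ)..y + b / 2, f t) - ∫ t in (0 : ℝ)..y + -(b / 2), f t) / b := by
    ext y
    rw [boxAvg, ← sub_eq_add_neg,
      intervalIntegral.integral_interval_sub_left (hf.intervalIntegrable _ _)
        (hf.intervalIntegrable _ _)]
  rw [hsplit, centralDiff, sub_eq_add_neg x]
  exact ((hF _).sub (hF _)).div_const b

theorem continuous_boxAvg (hf : Continuous f) : Continuous (boxAvg b f) :=
  continuous_iff_continuousAt.2 fun x => (hasDerivAt_boxAvg hf x).continuousAt

theorem boxAvg_eq_centralDiff (hf : ∀ y, HasDerivAt f (f' y) y) (hf' : Continuous f') :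
    boxAvg b f' = centralDiff b f := by
  ext x
  rw [boxAvg, centralDiff,
    intervalIntegral.integral_eq_sub_of_hasDerivAt (fun t _ => hf t) (hf'.intervalIntegrable _ _)]

theorem boxAvg_mem_Icc {m M x : ℝ} (hb : 0 < b) (hf : Continuous f)
    (h : ∀ t ∈ closedBall x (b / 2), f t ∈ Icc m M) : boxAvg b f x ∈ Icc m M := by
  have hle : x - b / 2 ≤ x + b / 2 := by linarith
  have hmem : ∀ t ∈ Icc (x - b / 2) (x + b / 2), f t ∈ Icc m M := by
    rwa [← Real.closedBall_eq_Icc]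
  have hlen : x + b / 2 - (x - b / 2) = b := by ring
  rw [boxAvg, mem_Icc, le_div_iff₀ hb, div_le_iff₀ hb]
  constructor
  · calc m * b = ∫ _ in x - b / 2..x + b / 2, m := by simp [hlen, mul_comm]
      _ ≤ ∫ t in x - b / 2..x + b / 2, f t :=
        intervalIntegral.integral_mono_on hle intervalIntegrable_const
          (hf.intervalIntegrable _ _) fun t ht => (hmem t ht).1
  · calc ∫ t in x - b / 2..x + b / 2, f t ≤ ∫ _ in x - b / 2..x + b / 2, M :=
        intervalIntegral.integral_mono_on hle (hf.intervalIntegrable _ _)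
          intervalIntegrable_const fun t ht => (hmem t ht).2
      _ = M * b := by simp [hlen, mul_comm]

theorem abs_boxAvg_sub_le {K : ℝ} (hb : 0 < b) (hf : ∀ y, HasDerivAt f (f' y) y)
    (hK : ∀ t, |f' t| ≤ K) (x : ℝ) : |boxAvg b f x - f x| ≤ K * b / 2 := by
  have hcont : Continuous f := continuous_iff_continuousAt.2 fun y => (hf y).continuousAt
  have hK0 : 0 ≤ K := (abs_nonneg _).trans (hK 0)
  suffices boxAvg b f x ∈ Icc (f x - K * (b / 2)) (f x + K * (b / 2)) by
    rw [abs_le, mul_div_assoc]; constructor <;> linarith [this.1, this.2]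
  refine boxAvg_mem_Icc hb hcont fun t ht => ?_
  have hmv : |f t - f x| ≤ K * |t - x| :=
    convex_univ.norm_image_sub_le_of_norm_hasDerivWithin_le
      (fun y _ => (hf y).hasDerivWithinAt) (fun y _ => hK y) trivial trivial
  have htx : |t - x| ≤ b / 2 := by rwa [mem_closedBall, Real.dist_eq] at ht
  have : |f t - f x| ≤ K * (b / 2) := hmv.trans (by gcongr)
  rw [abs_le] at this
  constructor <;> linarith [this.1, this.2]

end BoxAverage

noncomputable def iterCentralDiff (b : ℕ → ℝ) (u : ℝ → ℝ) : ℕ → ℝ → ℝ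
  | 0 => u
  | k + 1 => centralDiff (b k) (iterCentralDiff b u k)

/-- The `k`-th derivative of the `(k+m)`-fold smoothing `T_{b (k+m-1)} ⋯ T_{b 0} u` (for `m ≥ 1`,
see `hasDerivAt_smoothingDeriv`), computed as `T_{b (k+m-1)} ⋯ T_{b k} S_{b (k-1)} ⋯ S_{b 0} u`
with `T = boxAvg` and `S = centralDiff`. -/
noncomputable def smoothingDeriv (b : ℕ → ℝ) (u : ℝ → ℝ) (k : ℕ) : ℕ → ℝ → ℝ
  | 0 => iterCentralDiff b u k
  | m + 1 => boxAvg (b (k + m)) (smoothingDeriv b u k m)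

section Smoothing

variable {b : ℕ → ℝ} {u : ℝ → ℝ} {B : ℝ}

theorem continuous_iterCentralDiff (hu : Continuous u) (k : ℕ) :
    Continuous (iterCentralDiff b u k) := by
  induction k with
  | zero => exact hu
  | succ k ih => exact continuous_centralDiff ih

theorem continuous_smoothingDeriv (hu : Continuous u) (k m : ℕ) :
    Continuous (smoothingDeriv b u k m) := by
  induction m with
  | zero => exact continuous_iterCentralDiff hu k
  | succ m ih => exact continuous_boxAvg ih

theorem hasDerivAt_smoothingDeriv (hu : Continuous u) (k m : ℕ) (x : ℝ) :
    HasDerivAt (smoothingDeriv b u k (m + 1)) (smoothingDeriv b u (k + 1) m x) x := by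
  induction m generalizing k x with
  | zero => exact hasDerivAt_boxAvg (continuous_iterCentralDiff hu k) x
  | succ m ih =>
    -- `T` commutes with differentiation: `(T f)' = S f = T f'`
    have hcomm : boxAvg (b (k + (m + 1))) (smoothingDeriv b u (k + 1) m) =
        centralDiff (b (k + (m + 1))) (smoothingDeriv b u k (m + 1)) :=
      boxAvg_eq_centralDiff (ih k) (continuous_smoothingDeriv hu (k + 1) m)
    have hidx : k + 1 + m = k + (m + 1) := by omega
    simp only [smoothingDeriv, hidx, hcomm]
    exact hasDerivAt_boxAvg (continuous_smoothingDeriv hu k (m + 1)) x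

theorem abs_iterCentralDiff_le (hb : ∀ i, 0 < b i) (hB : ∀ x, |u x| ≤ B) (k : ℕ) (x : ℝ) :
    |iterCentralDiff b u k x| ≤ 2 ^ k * B / ∏ i ∈ Finset.range k, b i := by
  induction k generalizing x with
  | zero => simpa [iterCentralDiff] using hB x
  | succ k ih =>
    have hk : 2 ^ (k + 1) * B / ∏ i ∈ Finset.range (k + 1), b i =
        2 * (2 ^ k * B / ∏ i ∈ Finset.range k, b i) / b k := by
      rw [Finset.prod_range_succ, pow_succ]
      field_simp
    rw [hk]
    exact abs_centralDiff_le (hb k) ih x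

theorem abs_smoothingDeriv_le (hb : ∀ i, 0 < b i) (hu : Continuous u) (hB : ∀ x, |u x| ≤ B)
    (k m : ℕ) (x : ℝ) :
    |smoothingDeriv b u k m x| ≤ 2 ^ k * B / ∏ i ∈ Finset.range k, b i := by
  induction m generalizing x with
  | zero => exact abs_iterCentralDiff_le hb hB k x
  | succ m ih =>
    rw [abs_le, ← mem_Icc]
    exact boxAvg_mem_Icc (hb _) (continuous_smoothingDeriv hu k m)
      fun t _ => mem_Icc.2 (abs_le.1 (ih t))

theorem abs_smoothingDeriv_succ_sub_le (hb : ∀ i, 0 < b i) (hu : Continuous u)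
    (hB : ∀ x, |u x| ≤ B) (k m : ℕ) (x : ℝ) :
    |smoothingDeriv b u k (m + 2) x - smoothingDeriv b u k (m + 1) x| ≤
      2 ^ (k + 1) * B / (∏ i ∈ Finset.range (k + 1), b i) * b (k + (m + 1)) / 2 :=
  abs_boxAvg_sub_le (hb _) (hasDerivAt_smoothingDeriv hu k m)
    (abs_smoothingDeriv_le hb hu hB (k + 1) m) x

theorem smoothingDeriv_zero_mem_Icc (hb : ∀ i, 0 < b i) (hu : Continuous u) {m M : ℝ}
    (n : ℕ) (x : ℝ) (h : ∀ y ∈ closedBall x ((∑ i ∈ Finset.range n, b i) / 2), u y ∈ Icc m M) :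
    smoothingDeriv b u 0 n x ∈ Icc m M := by
  induction n generalizing x with
  | zero => exact h x (by simp)
  | succ n ih =>
    refine boxAvg_mem_Icc (hb _) (continuous_smoothingDeriv hu 0 n) fun t ht => ih t ?_
    intro y hy
    refine h y (mem_closedBall.2 ?_)
    rw [mem_closedBall] at hy
    rw [mem_closedBall, zero_add] at ht
    rw [Finset.sum_range_succ]
    linarith [dist_triangle y t x]

end Smoothing

theorem exists_tendstoUniformly_of_abs_sub_le {α : Type*} {F : ℕ → α → ℝ} {d : ℕ → ℝ}
    (hd : Summable d) (h : ∀ n x, |F (n + 1) x - F n x| ≤ d n) :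
    ∃ G, TendstoUniformly F G atTop := by
  have hsum := tendstoUniformly_tsum_nat hd (f := fun n x => F (n + 1) x - F n x) h
  refine ⟨fun x => F 0 x + ∑' n, (F (n + 1) x - F n x), ?_⟩
  rw [Metric.tendstoUniformly_iff] at hsum ⊢
  intro ε hε
  filter_upwards [hsum ε hε] with N hN x
  have hNx := hN x
  rw [Finset.sum_range_sub (fun n => F n x), Real.dist_eq] at hNx
  rw [Real.dist_eq]
  convert hNx using 2
  ring

theorem iteratedDeriv_eq_of_hasDerivAt_succ {𝕜 F : Type*} [NontriviallyNormedField 𝕜]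
    [NormedAddCommGroup F] [NormedSpace 𝕜 F] {g : ℕ → 𝕜 → F}
    (h : ∀ k x, HasDerivAt (g k) (g (k + 1) x) x) (k : ℕ) : iteratedDeriv k (g 0) = g k := by
  induction k with
  | zero => exact iteratedDeriv_zero
  | succ k ih => rw [iteratedDeriv_succ, ih]; exact funext fun x => (h k x).deriv

theorem contDiff_of_hasDerivAt_succ {𝕜 F : Type*} [NontriviallyNormedField 𝕜]
    [NormedAddCommGroup F] [NormedSpace 𝕜 F] {g : ℕ → 𝕜 → F}
    (h : ∀ k x, HasDerivAt (g k) (g (k + 1) x) x) : ContDiff 𝕜 (⊤ : ℕ∞) (g 0) :=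
  contDiff_of_differentiable_iteratedDeriv fun k _ => by
    rw [iteratedDeriv_eq_of_hasDerivAt_succ h k]
    exact fun x => (h k x).differentiableAt

theorem exists_contDiff_abs_iteratedDeriv_le {b : ℕ → ℝ} {u : ℝ → ℝ} {B : ℝ}
    (hb : ∀ i, 0 < b i) (hbs : Summable b) (hu : Continuous u) (hB : ∀ x, |u x| ≤ B) :
    ∃ φ : ℝ → ℝ, ContDiff ℝ (⊤ : ℕ∞) φ ∧
      (∀ k x, |iteratedDeriv k φ x| ≤ 2 ^ k * B / ∏ i ∈ Finset.range k, b i) ∧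
      ∀ x m M, (∀ y ∈ closedBall x ((∑' i, b i) / 2), u y ∈ Icc m M) → φ x ∈ Icc m M := by
  have hconv : ∀ k, ∃ G, TendstoUniformly (fun m => smoothingDeriv b u k (m + 1)) G atTop := by
    intro k
    have htail : Summable fun m => b (k + (m + 1)) :=
      ((summable_nat_add_iff (k + 1)).2 hbs).congr fun m => congrArg b (by ring)
    exact exists_tendstoUniformly_of_abs_sub_le ((htail.mul_left _).div_const 2)
      (abs_smoothingDeriv_succ_sub_le hb hu hB k)
  choose g hg using hconv
  have hlim : ∀ k x, Tendsto (fun m => smoothingDeriv b u k (m + 1) x) atTop (𝓝 (g k x)) :=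
    fun k x => (hg k).tendsto_at x
  have hderiv : ∀ k x, HasDerivAt (g k) (g (k + 1) x) x := fun k =>
    hasDerivAt_of_tendstoUniformly (hg (k + 1))
      (Eventually.of_forall fun m => hasDerivAt_smoothingDeriv hu k (m + 1))
      fun y => (hlim k y).comp (tendsto_add_atTop_nat 1)
  refine ⟨g 0, contDiff_of_hasDerivAt_succ hderiv, fun k x => ?_, fun x m M h => ?_⟩
  · rw [iteratedDeriv_eq_of_hasDerivAt_succ hderiv]
    exact le_of_tendsto (hlim k x).abs
      (Eventually.of_forall fun m => abs_smoothingDeriv_le hb hu hB k (m + 1) x)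
  · refine isClosed_Icc.mem_of_tendsto (hlim 0 x) (Eventually.of_forall fun n => ?_)
    refine smoothingDeriv_zero_mem_Icc hb hu (n + 1) x fun y hy => h y ?_
    refine closedBall_subset_closedBall ?_ hy
    gcongr
    exact hbs.sum_le_tsum _ fun i _ => (hb i).le

noncomputable def cutoffWidths (c η : ℝ) (N : ℕ) (f : ℕ → ℝ) (i : ℕ) : ℝ :=
  c * (if i < N then η else 1) * f i

section CutoffWidths

variable {c η : ℝ} {N : ℕ} {f : ℕ → ℝ}

theorem cutoffWidths_pos (hc : 0 < c) (hη : 0 < η) (hf : ∀ i, 0 < f i) (i : ℕ) :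
    0 < cutoffWidths c η N f i := by
  have := hf i
  unfold cutoffWidths
  split_ifs <;> positivity

theorem summable_cutoffWidths (hc : 0 < c) (hη0 : 0 < η) (hη1 : η ≤ 1) (hf : ∀ i, 0 < f i)
    (hfs : Summable f) : Summable (cutoffWidths c η N f) := by
  refine (hfs.mul_left c).of_nonneg_of_le (fun i => (cutoffWidths_pos hc hη0 hf i).le) fun i => ?_
  have := hf i
  unfold cutoffWidths
  split_ifs
  · gcongr; exact mul_le_of_le_one_right hc.le hη1
  · simp

theorem tsum_cutoffWidths_le (hc : 0 < c) (hη0 : 0 < η) (hη1 : η ≤ 1) (hf : ∀ i, 0 < f i)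
    (hfs : Summable f) :
    ∑' i, cutoffWidths c η N f i ≤ c * (η * ∑' i, f i + ∑' i, f (i + N)) := by
  have hhead : ∑ i ∈ Finset.range N, cutoffWidths c η N f i =
      c * η * ∑ i ∈ Finset.range N, f i := by
    rw [Finset.mul_sum]
    exact Finset.sum_congr rfl fun i hi => by simp [cutoffWidths, Finset.mem_range.1 hi]
  have htail : ∑' i, cutoffWidths c η N f (i + N) = c * ∑' i, f (i + N) := by
    rw [← tsum_mul_left]
    exact tsum_congr fun i => by simp [cutoffWidths]
  rw [← (summable_cutoffWidths hc hη0 hη1 hf hfs).sum_add_tsum_nat_add N, hhead, htail, mul_add,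
    mul_assoc]
  gcongr
  exact hfs.sum_le_tsum _ fun i _ => (hf i).le

theorem pow_mul_prod_le_prod_cutoffWidths (hc : 0 < c) (hη0 : 0 < η) (hη1 : η ≤ 1)
    (hf : ∀ i, 0 < f i) (k : ℕ) :
    η ^ N * (c ^ k * ∏ i ∈ Finset.range k, f i) ≤ ∏ i ∈ Finset.range k, cutoffWidths c η N f i := by
  have hshrink : η ^ N ≤ ∏ i ∈ Finset.range k, if i < N then η else 1 := by
    rw [Finset.prod_ite, Finset.prod_const, Finset.prod_const_one, mul_one]
    refine pow_le_pow_of_le_one hη0.le hη1 ?_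
    calc ((Finset.range k).filter (· < N)).card ≤ (Finset.range N).card :=
          Finset.card_le_card fun i hi => Finset.mem_range.2 (Finset.mem_filter.1 hi).2
      _ = N := Finset.card_range N
  have hprod : 0 < ∏ i ∈ Finset.range k, f i := Finset.prod_pos fun i _ => hf i
  simp only [cutoffWidths, Finset.prod_mul_distrib, Finset.prod_const, Finset.card_range]
  calc η ^ N * (c ^ k * ∏ i ∈ Finset.range k, f i)
      = c ^ k * η ^ N * ∏ i ∈ Finset.range k, f i := by ring
    _ ≤ _ := by gcongr

end CutoffWidths

theorem exists_widths {f : ℕ → ℝ} (hf : ∀ k, 0 < f k) (hfs : Summable f) {δ ε : ℝ}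
    (hδ : 0 < δ) (hε : 0 < ε) :
    ∃ b : ℕ → ℝ, (∀ i, 0 < b i) ∧ Summable b ∧ ∑' i, b i ≤ ε ∧
      ∃ C > 0, ∀ k, 2 ^ k / ∏ i ∈ Finset.range k, b i ≤ C * δ ^ k / ∏ i ∈ Finset.range k, f i := by
  set F := ∑' i, f i
  have hF : 0 < F := hfs.tsum_pos (fun i => (hf i).le) 0 (hf 0)
  obtain ⟨N, hN⟩ : ∃ N, ∑' i, f (i + N) ≤ δ * ε / 4 :=
    ((tendsto_sum_nat_add f).eventually (ge_mem_nhds (by positivity))).exists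
  set η := min 1 (δ * ε / (4 * F))
  have hη0 : 0 < η := lt_min one_pos (by positivity)
  have hη1 : η ≤ 1 := min_le_left _ _
  have hc : 0 < 2 / δ := by positivity
  refine ⟨cutoffWidths (2 / δ) η N f, cutoffWidths_pos hc hη0 hf,
    summable_cutoffWidths hc hη0 hη1 hf hfs, ?_, (η ^ N)⁻¹, by positivity, fun k => ?_⟩
  · have hηF : η * F ≤ δ * ε / 4 := by
      calc η * F ≤ δ * ε / (4 * F) * F := by gcongr; exact min_le_right _ _
        _ = δ * ε / 4 := by field_simp
    calc ∑' i, cutoffWidths (2 / δ) η N f i ≤ 2 / δ * (η * F + ∑' i, f (i + N)) :=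
          tsum_cutoffWidths_le hc hη0 hη1 hf hfs
      _ ≤ 2 / δ * (δ * ε / 4 + δ * ε / 4) := by gcongr
      _ = ε := by field_simp; ring
  · have hprod : 0 < ∏ i ∈ Finset.range k, f i := Finset.prod_pos fun i _ => hf i
    calc 2 ^ k / ∏ i ∈ Finset.range k, cutoffWidths (2 / δ) η N f i
        ≤ 2 ^ k / (η ^ N * ((2 / δ) ^ k * ∏ i ∈ Finset.range k, f i)) := by
          gcongr
          exact pow_mul_prod_le_prod_cutoffWidths hc hη0 hη1 hf k
      _ = (η ^ N)⁻¹ * δ ^ k / ∏ i ∈ Finset.range k, f i := by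
          rw [div_pow]
          field_simp

theorem tsupport_subset_Icc_of_forall_lt_abs {φ : ℝ → ℝ} {R : ℝ}
    (h : ∀ x, R < |x| → φ x = 0) : tsupport φ ⊆ Icc (-R) R :=
  closure_minimal (fun x hx => abs_le.1 (not_lt.1 fun hR => hx (h x hR))) isClosed_Icc

theorem exists_cutoff_of_widths {b : ℕ → ℝ} (hb : ∀ i, 0 < b i) (hbs : Summable b) {R : ℝ}
    (hbR : ∑' i, b i ≤ R / 4) :
    ∃ φ : ℝ → ℝ, ContDiff ℝ (⊤ : ℕ∞) φ ∧ tsupport φ ⊆ Icc (-R) R ∧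
      (∀ x, 0 ≤ φ x ∧ φ x ≤ 1) ∧ φ =ᶠ[𝓝 0] (fun _ => 1) ∧
      ∀ k x, |iteratedDeriv k φ x| ≤ 2 ^ k / ∏ i ∈ Finset.range k, b i := by
  have hR : 0 < R := by linarith [hbs.tsum_pos (fun i => (hb i).le) 0 (hb 0)]
  let u : ContDiffBump (0 : ℝ) := ⟨R / 4, R / 2, by positivity, by linarith⟩
  obtain ⟨φ, hφ, hφ_deriv, hφ_Icc⟩ := exists_contDiff_abs_iteratedDeriv_le hb hbs u.continuous
    (B := 1) fun x => abs_le.2 ⟨by linarith [u.nonneg (x := x)], u.le_one⟩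
  have hconst : ∀ x v, (∀ y ∈ closedBall x ((∑' i, b i) / 2), u y = v) → φ x = v :=
    fun x v h => by simpa using hφ_Icc x v v fun y hy => by simp [h y hy]
  have hone : ∀ x ∈ ball (0 : ℝ) (R / 8), φ x = 1 := fun x hx =>
    hconst x 1 fun y hy => u.one_of_mem_closedBall <| by
      rw [mem_closedBall] at hy ⊢
      rw [mem_ball] at hx
      show _ ≤ R / 4
      linarith [dist_triangle y x 0]
  have hzero : ∀ x, 5 * R / 8 < |x| → φ x = 0 := fun x hx =>
    hconst x 0 fun y hy => u.zero_of_le_dist <| by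
      rw [mem_closedBall, dist_comm] at hy
      rw [← Real.norm_eq_abs, ← dist_zero_right] at hx
      show R / 2 ≤ _
      linarith [dist_triangle x y 0]
  refine ⟨φ, hφ, (tsupport_subset_Icc_of_forall_lt_abs hzero).trans
      (Icc_subset_Icc (by linarith) (by linarith)),
    fun x => hφ_Icc x 0 1 fun y _ => ⟨u.nonneg, u.le_one⟩,
    eventually_of_mem (ball_mem_nhds 0 (by positivity)) hone, fun k x => ?_⟩
  simpa using hφ_deriv k x

theorem prod_Icc_one_eq_prod_range {M : Type*} [CommMonoid M] (f : ℕ → M) (k : ℕ) :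
    ∏ i ∈ Finset.Icc 1 k, f i = ∏ i ∈ Finset.range k, f (i + 1) := by
  induction k with
  | zero => simp
  | succ k ih => rw [Finset.prod_Icc_succ_top (by omega), ih, Finset.prod_range_succ]

theorem stmt_11_general (a : ℕ → ℝ) (hpos : ∀ k, 1 ≤ k → 0 < a k)
    (hsum : Summable (fun k : ℕ => a (k + 1)))
    (δ : ℝ) (hδ : 0 < δ) :
    ∃ φ : ℝ → ℝ, ∃ C : ℝ, ContDiff ℝ (⊤ : ℕ∞) φ ∧ HasCompactSupport φ ∧ 0 < C ∧
      tsupport φ ⊆ Icc (-(∑' k : ℕ, a (k + 1))) (∑' k : ℕ, a (k + 1)) ∧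
      (∀ x : ℝ, 0 ≤ φ x ∧ φ x ≤ 1) ∧
      φ 0 = 1 ∧ (∀ p : ℕ, 1 ≤ p → iteratedDeriv p φ 0 = 0) ∧
      ∀ k : ℕ, ∀ x : ℝ,
        |iteratedDeriv k φ x| ≤ C * δ ^ k / ∏ i ∈ Finset.Icc 1 k, a i := by
  have ha : ∀ k, 0 < a (k + 1) := fun k => hpos _ k.succ_pos
  have hA : 0 < ∑' k : ℕ, a (k + 1) := hsum.tsum_pos (fun k => (ha k).le) 0 (ha 0)
  obtain ⟨b, hb, hbs, hbA, C, hC, hbC⟩ :=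
    exists_widths (ε := (∑' k : ℕ, a (k + 1)) / 4) ha hsum hδ (by positivity)
  obtain ⟨φ, hφ, hsupp, hrange, hflat, hφ_deriv⟩ := exists_cutoff_of_widths hb hbs hbA
  refine ⟨φ, C, hφ, isCompact_Icc.of_isClosed_subset (isClosed_tsupport φ) hsupp, hC, hsupp,
    hrange, hflat.eq_of_nhds, fun p hp => ?_, fun k x => ?_⟩
  · rw [hflat.iteratedDeriv_eq, iteratedDeriv_const, if_neg (by omega)]
  · rw [prod_Icc_one_eq_prod_range]
    exact (hφ_deriv k x).trans (hbC k)

/-- Cutoff corollary: for a nonincreasing positive summable sequence (a_k)_{k≥1}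
with sum a, and any δ > 0, there is a smooth φ with support in [-a,a],
0 ≤ φ ≤ 1, φ(0) = 1, φ^{(p)}(0) = 0 for p ≥ 1, and
|φ^{(k)}| ≤ C δ^k (a₁ ⋯ a_k)⁻¹. -/
theorem stmt_11 (a : ℕ → ℝ) (hpos : ∀ k, 1 ≤ k → 0 < a k)
    (hmono : ∀ k, 1 ≤ k → a (k + 1) ≤ a k)
    (hsum : Summable (fun k : ℕ => a (k + 1)))
    (δ : ℝ) (hδ : 0 < δ) :
    ∃ φ : ℝ → ℝ, ∃ C : ℝ, ContDiff ℝ (⊤ : ℕ∞) φ ∧ HasCompactSupport φ ∧ 0 < C ∧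
      tsupport φ ⊆ Icc (-(∑' k : ℕ, a (k + 1))) (∑' k : ℕ, a (k + 1)) ∧
      (∀ x : ℝ, 0 ≤ φ x ∧ φ x ≤ 1) ∧
      φ 0 = 1 ∧ (∀ p : ℕ, 1 ≤ p → iteratedDeriv p φ 0 = 0) ∧
      ∀ k : ℕ, ∀ x : ℝ,
        |iteratedDeriv k φ x| ≤ C * δ ^ k / ∏ i ∈ Finset.Icc 1 k, a i :=
  stmt_11_general a hpos hsum δ hδ
end

section
/- Let -∞ < T₁ < T₂ < ∞ and 1 < σ < s. Let f, g : ℝ → ℝ be infinitely differentiable on [T₁,T₂] and assume there are constants C, C', R, ρ > 0 such that |f^{(n)}(t)| ≤ C (n!)^s / R^n and |g^{(n)}(t)| ≤ C' (n!)^σ / ρ^n for all n ∈ ℕ and all t ∈ [T₁,T₂]. Then there exists a constant C'' > 0 such that |(fg)^{(n)}(t)| ≤ C'' (n!)^s / R^n for all n ∈ ℕ and all t ∈ [T₁,T₂] (i.e., the product fg is Gevrey of order s on [T₁,T₂] with the same constant R as f). -/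
/-!
By Leibniz' rule, `(fg)⁽ⁿ⁾` is bounded by `C C' ∑ᵢ (n choose i) (i!)ˢ (j!)^σ / (Rⁱ ρʲ)` with
`j = n - i`. Since `s ≥ 1`, `(n choose i) (i!)ˢ (j!)ˢ ≤ (n!)ˢ`, so the `i`-th term is at most
`(n!)ˢ / Rⁿ` times `(R/ρ)ʲ / (j!)^(s-σ)`. As `s - σ > 0`, the factorial power beats even
`(2R/ρ)ʲ`: these factors are `O(2⁻ʲ)`, so their sum over `j` is bounded independently of `n`.
-/

open Set Finset

theorem norm_iteratedDerivWithin_mul_le {𝕜 A : Type*} [NontriviallyNormedField 𝕜] [NormedRing A]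
    [NormedAlgebra 𝕜 A] {f g : 𝕜 → A} {N : WithTop ℕ∞} {s : Set 𝕜}
    (hf : ContDiffOn 𝕜 N f s) (hg : ContDiffOn 𝕜 N g s) (hs : UniqueDiffOn 𝕜 s)
    {x : 𝕜} (hx : x ∈ s) {n : ℕ} (hn : n ≤ N) :
    ‖iteratedDerivWithin n (fun y => f y * g y) s x‖ ≤
      ∑ i ∈ range (n + 1), (n.choose i : ℝ) * ‖iteratedDerivWithin i f s x‖ *
        ‖iteratedDerivWithin (n - i) g s x‖ := by
  simpa only [norm_iteratedFDerivWithin_eq_norm_iteratedDerivWithin]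
    using norm_iteratedFDerivWithin_mul_le hf hg hs hx hn

theorem exists_pow_le_mul_factorial_rpow {ε : ℝ} (hε : 0 < ε) (a : ℝ) :
    ∃ K : ℝ, 0 < K ∧ ∀ j : ℕ, a ^ j ≤ K * (j.factorial : ℝ) ^ ε := by
  set M := |a| ^ ε⁻¹
  have hM : 0 ≤ M := by positivity
  refine ⟨Real.exp M ^ ε, by positivity, fun j => ?_⟩
  have hj : M ^ j ≤ Real.exp M * j.factorial :=
    (div_le_iff₀ (by positivity)).mp (Real.pow_div_factorial_le_exp M hM j)
  calc a ^ j ≤ |a| ^ j := (le_abs_self _).trans (abs_pow a j).le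
    _ = (M ^ j) ^ ε := by rw [← Real.rpow_pow_comm hM, Real.rpow_inv_rpow (abs_nonneg a) hε.ne']
    _ ≤ (Real.exp M * j.factorial) ^ ε := by gcongr
    _ = Real.exp M ^ ε * (j.factorial : ℝ) ^ ε := Real.mul_rpow (by positivity) (by positivity)

theorem choose_mul_factorial_rpow_mul_le {s : ℝ} (hs : 1 ≤ s) {n i : ℕ} (hi : i ≤ n) :
    (n.choose i : ℝ) * (i.factorial : ℝ) ^ s * ((n - i).factorial : ℝ) ^ s ≤
      (n.factorial : ℝ) ^ s := by
  set p : ℝ := i.factorial * (n - i).factorial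
  have hchoose : (n.choose i : ℝ) * p = n.factorial := by
    simp only [p, ← mul_assoc]; exact_mod_cast Nat.choose_mul_factorial_mul_factorial hi
  have hp : p ≤ n.factorial := by
    rw [← hchoose]; exact le_mul_of_one_le_left (by positivity)
      (by exact_mod_cast Nat.choose_pos hi)
  have hrpow (x : ℝ) (hx : 0 ≤ x) : x ^ s = x * x ^ (s - 1) := by
    rw [mul_comm, ← Real.rpow_add_one' hx (by linarith), sub_add_cancel]
  calc (n.choose i : ℝ) * (i.factorial : ℝ) ^ s * ((n - i).factorial : ℝ) ^ s
      = (n.choose i : ℝ) * p ^ s := by rw [mul_assoc, Real.mul_rpow (by positivity) (by positivity)]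
    _ = n.factorial * p ^ (s - 1) := by rw [hrpow p (by positivity), ← mul_assoc, hchoose]
    _ ≤ n.factorial * (n.factorial : ℝ) ^ (s - 1) := by gcongr
    _ = (n.factorial : ℝ) ^ s := (hrpow _ (by positivity)).symm

theorem choose_mul_factorial_rpow_div_le {s σ R ρ K : ℝ} (hs : 1 ≤ s) (hR : 0 < R) (hρ : 0 < ρ)
    (hpow : ∀ j : ℕ, (2 * R / ρ) ^ j ≤ K * (j.factorial : ℝ) ^ (s - σ)) {n i : ℕ} (hi : i ≤ n) :
    (n.choose i : ℝ) * ((i.factorial : ℝ) ^ s / R ^ i) *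
        (((n - i).factorial : ℝ) ^ σ / ρ ^ (n - i)) ≤
      K * (n.factorial : ℝ) ^ s / R ^ n * (1 / 2) ^ (n - i) := by
  have hK : 0 ≤ K := zero_le_one.trans (by simpa using hpow 0)
  set j := n - i
  have hRn : R ^ n = R ^ i * R ^ j := by rw [← pow_add, Nat.add_sub_cancel' hi]
  have hj : (j.factorial : ℝ) ^ σ * (2 * R / ρ) ^ j ≤ K * (j.factorial : ℝ) ^ s :=
    calc (j.factorial : ℝ) ^ σ * (2 * R / ρ) ^ j
        ≤ (j.factorial : ℝ) ^ σ * (K * (j.factorial : ℝ) ^ (s - σ)) := by gcongr; exact hpow j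
      _ = K * (j.factorial : ℝ) ^ s := by
        rw [mul_left_comm, ← Real.rpow_add (by positivity), add_sub_cancel]
  calc (n.choose i : ℝ) * ((i.factorial : ℝ) ^ s / R ^ i) * ((j.factorial : ℝ) ^ σ / ρ ^ j)
      = (n.choose i : ℝ) * (i.factorial : ℝ) ^ s * ((j.factorial : ℝ) ^ σ * (2 * R / ρ) ^ j)
          / R ^ n * (1 / 2) ^ j := by
        rw [hRn, div_pow, mul_pow, one_div, inv_pow]; field_simp
    _ ≤ (n.choose i : ℝ) * (i.factorial : ℝ) ^ s * (K * (j.factorial : ℝ) ^ s)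
          / R ^ n * (1 / 2) ^ j := by gcongr
    _ = K * ((n.choose i : ℝ) * (i.factorial : ℝ) ^ s * (j.factorial : ℝ) ^ s)
          / R ^ n * (1 / 2) ^ j := by ring
    _ ≤ K * (n.factorial : ℝ) ^ s / R ^ n * (1 / 2) ^ j := by
        gcongr
        exact choose_mul_factorial_rpow_mul_le hs hi

theorem sum_range_one_div_two_pow_sub_le (n : ℕ) :
    ∑ i ∈ range (n + 1), (1 / 2 : ℝ) ^ (n - i) ≤ 2 := by
  have hreflect := sum_range_reflect (fun j => (1 / 2 : ℝ) ^ j) (n + 1)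
  simp only [add_tsub_cancel_right] at hreflect
  exact hreflect ▸ sum_geometric_two_le (n + 1)

theorem exists_sum_choose_mul_factorial_rpow_le {s σ R ρ : ℝ} (hs : 1 ≤ s) (hσs : σ < s)
    (hR : 0 < R) (hρ : 0 < ρ) :
    ∃ K : ℝ, 0 < K ∧ ∀ n : ℕ,
      ∑ i ∈ range (n + 1), (n.choose i : ℝ) * ((i.factorial : ℝ) ^ s / R ^ i) *
        (((n - i).factorial : ℝ) ^ σ / ρ ^ (n - i)) ≤ K * (n.factorial : ℝ) ^ s / R ^ n := by
  obtain ⟨K, hK, hpow⟩ := exists_pow_le_mul_factorial_rpow (sub_pos.mpr hσs) (2 * R / ρ)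
  refine ⟨2 * K, by positivity, fun n => ?_⟩
  calc _ ≤ ∑ i ∈ range (n + 1), K * (n.factorial : ℝ) ^ s / R ^ n * (1 / 2) ^ (n - i) :=
        sum_le_sum fun i hi =>
          choose_mul_factorial_rpow_div_le hs hR hρ hpow (Nat.lt_succ_iff.mp (mem_range.mp hi))
    _ = K * (n.factorial : ℝ) ^ s / R ^ n * ∑ i ∈ range (n + 1), (1 / 2 : ℝ) ^ (n - i) :=
        (mul_sum _ _ _).symm
    _ ≤ K * (n.factorial : ℝ) ^ s / R ^ n * 2 := by
        gcongr; exact sum_range_one_div_two_pow_sub_le n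
    _ = 2 * K * (n.factorial : ℝ) ^ s / R ^ n := by ring

/-- Product of a Gevrey-s function and a Gevrey-σ function (1 < σ < s) is
Gevrey-s with the same radius R. -/
theorem stmt_13 (T₁ T₂ : ℝ) (hT : T₁ < T₂) (σ s : ℝ) (hσ : 1 < σ) (hs : σ < s)
    (f g : ℝ → ℝ)
    (hf : ContDiffOn ℝ (⊤ : ℕ∞) f (Icc T₁ T₂))
    (hg : ContDiffOn ℝ (⊤ : ℕ∞) g (Icc T₁ T₂))
    (C C' R ρ : ℝ) (hC : 0 < C) (hC' : 0 < C') (hR : 0 < R) (hρ : 0 < ρ)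
    (hfb : ∀ n : ℕ, ∀ t ∈ Icc T₁ T₂,
      |iteratedDerivWithin n f (Icc T₁ T₂) t| ≤ C * (n.factorial : ℝ) ^ s / R ^ n)
    (hgb : ∀ n : ℕ, ∀ t ∈ Icc T₁ T₂,
      |iteratedDerivWithin n g (Icc T₁ T₂) t| ≤ C' * (n.factorial : ℝ) ^ σ / ρ ^ n) :
    ∃ C'' : ℝ, 0 < C'' ∧ ∀ n : ℕ, ∀ t ∈ Icc T₁ T₂,
      |iteratedDerivWithin n (fun u => f u * g u) (Icc T₁ T₂) t|
        ≤ C'' * (n.factorial : ℝ) ^ s / R ^ n := by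
  obtain ⟨K, hK, hsum⟩ :=
    exists_sum_choose_mul_factorial_rpow_le (by linarith : 1 ≤ s) hs hR hρ
  refine ⟨C * C' * K, by positivity, fun n t ht => ?_⟩
  have hn : (n : WithTop ℕ∞) ≤ ((⊤ : ℕ∞) : WithTop ℕ∞) := by exact_mod_cast le_top
  calc |iteratedDerivWithin n (fun u => f u * g u) (Icc T₁ T₂) t|
      ≤ ∑ i ∈ range (n + 1), (n.choose i : ℝ) * |iteratedDerivWithin i f (Icc T₁ T₂) t| *
          |iteratedDerivWithin (n - i) g (Icc T₁ T₂) t| :=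
        norm_iteratedDerivWithin_mul_le hf hg (uniqueDiffOn_Icc hT) ht hn
    _ ≤ ∑ i ∈ range (n + 1), (n.choose i : ℝ) * (C * (i.factorial : ℝ) ^ s / R ^ i) *
          (C' * ((n - i).factorial : ℝ) ^ σ / ρ ^ (n - i)) := by
        gcongr with i
        exacts [hfb i t ht, hgb (n - i) t ht]
    _ = C * C' * ∑ i ∈ range (n + 1), (n.choose i : ℝ) * ((i.factorial : ℝ) ^ s / R ^ i) *
          (((n - i).factorial : ℝ) ^ σ / ρ ^ (n - i)) := by
        rw [mul_sum]; congr! 1 with i; ring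
    _ ≤ C * C' * (K * (n.factorial : ℝ) ^ s / R ^ n) := by gcongr; exact hsum n
    _ = C * C' * K * (n.factorial : ℝ) ^ s / R ^ n := by ring
end
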